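/- Let (W,S) be a Coxeter system with S finite, L a non-negative weight function, and let ℒ_L(W) denote the set of finite sequences (w_1,…,w_n) with L(w_1⋯w_n) = L(w_1)+⋯+L(w_n). Assume W_I is finite for every proper I ⊂ S. Then { x w y : w ∈ 𝒲, (x,w,y) ∈ ℒ_L(W), L(w) = ν_L } equals { x w_λ y : λ with W_λ finite, L(w_λ) = ν_L, (x, w_λ, y) ∈ ℒ_L(W) }, i.e., in the L-additive description of the lowest two-sided cell one may replace arbitrary maximal-weight elements w ∈ 𝒲 by longest elements w_I of parabolic subgroups with L(w_I) = ν_L. -/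

import Mathlib

/-!
A finite parabolic subgroup `W_I` with longest element `w₀` satisfies
`ℓ(v) + ℓ(v⁻¹w₀) = ℓ(w₀)` for all `v ∈ W_I`, hence `L(w₀) = L(v) + L(v⁻¹w₀)`. If `L(v) = ν`
is maximal, the factor `b = v⁻¹w₀` has weight zero, and a weight-zero factor can be moved from
the middle term of an `L`-additive triple `x · v · y` into `y` without changing any weight;
this replaces `v` by `w₀`. Conversely, when `W = W_S` is itself finite, a longest element of
weight `ν` is split in the same way against a longest element of a proper parabolic subgroup
of weight `ν`.

The length identity is an inversion count. Tits' sign representation of `W` on `T × {±1}`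
gives inversion sets `N(w)` of size `ℓ(w)` obeying the cocycle rule
`N(vu) = N(u) ∆ u⁻¹N(v)u`. Every reflection of `W_I` lies in `N(w₀)`, which forces `N(u)` and
`u⁻¹N(v)u` (for `u = v⁻¹w₀`) to be disjoint subsets of `N(w₀)`.
-/

namespace Stmt3

variable {B W Γ : Type*} [Group W] [AddCommGroup Γ] [LinearOrder Γ] [IsOrderedAddMonoid Γ]
variable {M : CoxeterMatrix B} (cs : CoxeterSystem M W)

/-- The standard parabolic subgroup `W_I`. -/
def par (I : Set B) : Subgroup W := Subgroup.closure (cs.simple '' I)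

/-- `w` is a longest element of `W_I`. -/
def IsLongest (I : Set B) (w : W) : Prop :=
  w ∈ par cs I ∧ ∀ v ∈ par cs I, cs.length v ≤ cs.length w

open CoxeterSystem List
open scoped Classical

-- Tits' permutation `(t, ε) ↦ (s t s, ±ε)` of `T × {±1}`, extended to all of `W × ℤˣ` so that
-- no reflection predicate has to be carried along.
noncomputable def simpleSignPerm (i : B) : Equiv.Perm (W × ℤˣ) :=
  Function.Involutive.toPerm
    (fun p => (cs.simple i * p.1 * cs.simple i, if p.1 = cs.simple i then -p.2 else p.2))
    (by
      rintro ⟨t, ε⟩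
      by_cases h : t = cs.simple i <;> simp [h, mul_assoc, mul_eq_one_iff_eq_inv])

theorem simpleSignPerm_apply (i : B) (t : W) (ε : ℤˣ) :
    simpleSignPerm cs i (t, ε) =
      (cs.simple i * t * cs.simple i, if t = cs.simple i then -ε else ε) := rfl

theorem prod_map_simpleSignPerm_apply (ω : List B) (t : W) (ε : ℤˣ) :
    (ω.map (simpleSignPerm cs)).prod (t, ε) =
      (cs.wordProd ω * t * (cs.wordProd ω)⁻¹, (-1) ^ (cs.rightInvSeq ω).count t * ε) := by
  induction ω with
  | nil => simp
  | cons i ω ih =>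
    have hris : cs.rightInvSeq (i :: ω) =
        ((cs.wordProd ω)⁻¹ * cs.simple i * cs.wordProd ω) :: cs.rightInvSeq ω := rfl
    have hcond : cs.wordProd ω * t * (cs.wordProd ω)⁻¹ = cs.simple i ↔
        (cs.wordProd ω)⁻¹ * cs.simple i * cs.wordProd ω = t := by
      constructor <;> intro h <;> rw [← h] <;> group
    rw [map_cons, prod_cons, Equiv.Perm.mul_apply, ih, hris, count_cons, wordProd_cons]
    simp only [simpleSignPerm_apply, hcond, beq_iff_eq, mul_inv_rev, inv_simple, Prod.mk.injEq]
    refine ⟨by group, ?_⟩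
    split_ifs <;> simp [pow_succ]

theorem alternatingWord_two_mul_reverse (i j : B) (p : ℕ) :
    (alternatingWord i j (2 * p)).reverse = alternatingWord j i (2 * p) := by
  induction p with
  | zero => rfl
  | succ p ih =>
    rw [show 2 * (p + 1) = 2 * p + 1 + 1 by ring, alternatingWord_succ, alternatingWord_succ,
      alternatingWord_succ', alternatingWord_succ']
    simp [ih]

theorem even_count_rightInvSeq_braid (i j : B) (t : W) :
    Even ((cs.rightInvSeq (alternatingWord i j (2 * M i j))).count t) := by
  set m := M i j
  -- the left inversion sequence of the reversed braid word is `k ↦ s_j (s_i s_j)^k`, which has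
  -- period `m`
  set f : ℕ → W := fun k => cs.wordProd (alternatingWord i j (2 * k + 1))
  have hlis : cs.leftInvSeq (alternatingWord j i (2 * m)) = (range (2 * m)).map f := by
    refine ext_getElem (by simp) fun k hk _ => ?_
    rw [getElem_leftInvSeq_alternatingWord cs j i m k (by simpa using hk)]
    simp [f]
  have hf : ∀ k, f (m + k) = f k := by
    intro k
    simp only [f, prod_alternatingWord_eq_mul_pow]
    rw [show (2 * (m + k) + 1) / 2 = m + k by omega, show (2 * k + 1) / 2 = k by omega, pow_add,
      cs.simple_mul_simple_pow, one_mul]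
    simp
  rw [← alternatingWord_two_mul_reverse, rightInvSeq_reverse, count_reverse, hlis, two_mul,
    range_add, map_append, map_map, count_append]
  have : f ∘ (fun k => m + k) = f := funext hf
  rw [this]
  exact ⟨_, rfl⟩

theorem simpleSignPerm_mul_pow (i j : B) (p : ℕ) :
    (simpleSignPerm cs i * simpleSignPerm cs j) ^ p =
      ((alternatingWord i j (2 * p)).map (simpleSignPerm cs)).prod := by
  induction p with
  | zero => simp [alternatingWord]
  | succ p ih =>
    rw [show 2 * (p + 1) = 2 * p + 1 + 1 by ring, alternatingWord_succ', alternatingWord_succ']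
    simp [ih, pow_succ', mul_assoc]

theorem isLiftable_simpleSignPerm : M.IsLiftable (simpleSignPerm cs) := by
  intro i j
  ext ⟨t, ε⟩ <;>
  · rw [simpleSignPerm_mul_pow, prod_map_simpleSignPerm_apply,
      (even_count_rightInvSeq_braid cs i j t).neg_one_pow, prod_alternatingWord_eq_mul_pow,
      if_pos (even_two_mul _), Nat.mul_div_cancel_left _ two_pos, cs.simple_mul_simple_pow]
    simp

noncomputable def signRep : W →* Equiv.Perm (W × ℤˣ) :=
  cs.lift ⟨simpleSignPerm cs, isLiftable_simpleSignPerm cs⟩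

theorem signRep_wordProd (ω : List B) :
    signRep cs (cs.wordProd ω) = (ω.map (simpleSignPerm cs)).prod := by
  rw [signRep, wordProd, map_list_prod, map_map]
  congr 2
  funext i
  exact cs.lift_apply_simple _ i

noncomputable def eta (w t : W) : ℤˣ := (signRep cs w (t, 1)).2

theorem eta_wordProd (ω : List B) (t : W) :
    eta cs (cs.wordProd ω) t = (-1) ^ (cs.rightInvSeq ω).count t := by
  rw [eta, signRep_wordProd, prod_map_simpleSignPerm_apply, mul_one]

theorem signRep_apply (w t : W) (ε : ℤˣ) :
    signRep cs w (t, ε) = (w * t * w⁻¹, eta cs w t * ε) := by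
  obtain ⟨ω, rfl⟩ := cs.wordProd_surjective w
  rw [signRep_wordProd, prod_map_simpleSignPerm_apply, eta_wordProd]

theorem eta_one (t : W) : eta cs 1 t = 1 := by
  simpa using eta_wordProd cs [] t

theorem eta_simple (i : B) (t : W) :
    eta cs (cs.simple i) t = if t = cs.simple i then -1 else 1 := by
  simp [eta, signRep, simpleSignPerm_apply]

theorem eta_mul (v u t : W) : eta cs (v * u) t = eta cs v (u * t * u⁻¹) * eta cs u t := by
  have h : signRep cs (v * u) (t, 1) = signRep cs v (signRep cs u (t, 1)) := by
    rw [map_mul, Equiv.Perm.mul_apply]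
  rw [signRep_apply, signRep_apply, signRep_apply, mul_one] at h
  simpa using congrArg Prod.snd h

theorem eta_inv_mul_eta (u t : W) : eta cs u⁻¹ (u * t * u⁻¹) * eta cs u t = 1 := by
  rw [← eta_mul, inv_mul_cancel, eta_one]

theorem eta_self_of_isReflection {t : W} (ht : cs.IsReflection t) : eta cs t t = -1 := by
  obtain ⟨u, i, rfl⟩ := ht
  have h := eta_inv_mul_eta cs u (cs.simple i)
  rw [eta_mul, eta_mul]
  simp only [mul_assoc, inv_mul_cancel_left, inv_mul_cancel, mul_one, inv_inv, eta_simple,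
    if_pos] at h ⊢
  rw [neg_one_mul, mul_neg, mul_comm, mul_inv_cancel, mul_one, h]

-- The inversion set `N(w)`. No reflection condition is needed: by `rightInvSet_wordProd` it
-- consists of the right inversions of `w`.
def rightInvSet (w : W) : Set W := {t | eta cs w t = -1}

theorem rightInvSet_wordProd {ω : List B} (hω : cs.IsReduced ω) :
    rightInvSet cs (cs.wordProd ω) = {t | t ∈ cs.rightInvSeq ω} := by
  ext t
  by_cases ht : t ∈ cs.rightInvSeq ω
  · simp [rightInvSet, eta_wordProd, ht, count_eq_one_of_mem hω.nodup_rightInvSeq ht]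
  · simp [rightInvSet, eta_wordProd, ht, count_eq_zero_of_not_mem ht]

theorem ncard_rightInvSet (w : W) : (rightInvSet cs w).ncard = cs.length w := by
  obtain ⟨ω, hω, rfl⟩ := cs.exists_isReduced w
  rw [rightInvSet_wordProd cs hω, hω.eq, ← cs.length_rightInvSeq,
    ← toFinset_card_of_nodup hω.nodup_rightInvSeq, ← Set.ncard_coe_finset]
  simp

theorem finite_rightInvSet (w : W) : (rightInvSet cs w).Finite := by
  obtain ⟨ω, hω, rfl⟩ := cs.exists_isReduced w
  rw [rightInvSet_wordProd cs hω]
  exact (cs.rightInvSeq ω).finite_toSet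

theorem isRightInversion_of_mem_rightInvSet {w t : W} (ht : t ∈ rightInvSet cs w) :
    cs.IsRightInversion w t := by
  obtain ⟨ω, hω, rfl⟩ := cs.exists_isReduced w
  rw [rightInvSet_wordProd cs hω] at ht
  exact cs.isRightInversion_of_mem_rightInvSeq hω ht

theorem mem_rightInvSet_mul_self_iff {w t : W} (ht : cs.IsReflection t) :
    t ∈ rightInvSet cs (w * t) ↔ t ∉ rightInvSet cs w := by
  simp only [rightInvSet, Set.mem_ofPred_eq, eta_mul, ht.mul_self, one_mul, ht.inv,
    eta_self_of_isReflection cs ht]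
  rcases Int.units_eq_one_or (eta cs w t) with h | h <;> simp [h]

theorem length_lt_length_mul_of_notMem_rightInvSet {w t : W} (ht : cs.IsReflection t)
    (hw : t ∉ rightInvSet cs w) : cs.length w < cs.length (w * t) := by
  have := (isRightInversion_of_mem_rightInvSet cs ((mem_rightInvSet_mul_self_iff cs ht).2 hw)).2
  rwa [mul_assoc, ht.mul_self, mul_one] at this

variable {I : Set B}

theorem rightInvSet_subset_par {z : W} (hz : z ∈ par cs I) : rightInvSet cs z ⊆ par cs I := by
  induction hz using Subgroup.closure_induction with
  | mem z hz =>
    obtain ⟨i, hi, rfl⟩ := hz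
    intro t ht
    have : t = cs.simple i := by
      by_contra h
      simp [rightInvSet, eta_simple, h] at ht
    exact this ▸ Subgroup.subset_closure ⟨i, hi, rfl⟩
  | one => simp [rightInvSet, eta_one]
  | mul x y hx hy ihx ihy =>
    intro t ht
    rcases Int.units_eq_one_or (eta cs y t) with h | h
    · have hconj : y * t * y⁻¹ ∈ par cs I := ihx (by simpa [rightInvSet, eta_mul, h] using ht)
      rw [show t = y⁻¹ * (y * t * y⁻¹) * y by group]
      exact mul_mem (mul_mem (inv_mem (hy : y ∈ par cs I)) hconj) hy
    · exact ihy h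
  | inv x hx ihx =>
    intro t ht
    have h := eta_inv_mul_eta cs x (x⁻¹ * t * x)
    rw [show x * (x⁻¹ * t * x) * x⁻¹ = t by group, show eta cs x⁻¹ t = -1 from ht, neg_one_mul,
      neg_eq_iff_eq_neg] at h
    rw [show t = x * (x⁻¹ * t * x) * x⁻¹ by group]
    exact mul_mem (mul_mem (hx : x ∈ par cs I) (ihx h)) (inv_mem hx)

theorem mem_rightInvSet_of_isLongest {w₀ t : W} (hw₀ : IsLongest cs I w₀)
    (ht : cs.IsReflection t) (htI : t ∈ par cs I) : t ∈ rightInvSet cs w₀ := by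
  by_contra h
  exact (hw₀.2 _ (mul_mem hw₀.1 htI)).not_gt
    (length_lt_length_mul_of_notMem_rightInvSet cs ht h)

theorem length_add_length_inv_mul_of_isLongest {w₀ v : W} (hw₀ : IsLongest cs I w₀)
    (hv : v ∈ par cs I) : cs.length v + cs.length (v⁻¹ * w₀) = cs.length w₀ := by
  set u := v⁻¹ * w₀
  have hu : u ∈ par cs I := mul_mem (inv_mem hv) hw₀.1
  have hvu : v * u = w₀ := mul_inv_cancel_left v w₀
  -- `N(u)` and `C = u⁻¹ N(v) u` are disjoint subsets of `N(w₀)` of sizes `ℓ u` and `ℓ v`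
  set C := MulAut.conj u ⁻¹' rightInvSet cs v
  have hA : rightInvSet cs u ⊆ rightInvSet cs w₀ := fun t ht =>
    mem_rightInvSet_of_isLongest cs hw₀ (isRightInversion_of_mem_rightInvSet cs ht).1
      (rightInvSet_subset_par cs hu ht)
  have hC : C ⊆ rightInvSet cs w₀ := by
    intro t ht
    have hconj : u⁻¹ * (u * t * u⁻¹) * u = t := by group
    refine mem_rightInvSet_of_isLongest cs hw₀ ?_ ?_
    · exact (cs.isReflection_conj_iff u t).1 (isRightInversion_of_mem_rightInvSet cs ht).1
    · rw [← hconj]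
      exact mul_mem (mul_mem (inv_mem hu) (rightInvSet_subset_par cs hv ht)) hu
  have hdisj : Disjoint (rightInvSet cs u) C := by
    rw [Set.disjoint_left]
    intro t htu htv
    have := hA htu
    simp only [rightInvSet, Set.mem_ofPred_eq, ← hvu, eta_mul] at this htu
    simp only [C, Set.mem_preimage, MulAut.conj_apply, rightInvSet, Set.mem_ofPred_eq] at htv
    rw [htu, htv] at this
    exact absurd this (by decide)
  have hcardC : C.ncard = cs.length v := by
    rw [Set.ncard_preimage_of_injective_subset_range (MulAut.conj u).injective (by simp),
      ncard_rightInvSet]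
  have hle : cs.length u + cs.length v ≤ cs.length w₀ := by
    rw [← ncard_rightInvSet cs u, ← hcardC, ← ncard_rightInvSet cs w₀,
      ← Set.ncard_union_eq hdisj ((finite_rightInvSet cs w₀).subset hA)
        ((finite_rightInvSet cs w₀).subset hC)]
    exact Set.ncard_le_ncard (Set.union_subset hA hC) (finite_rightInvSet cs w₀)
  have hge : cs.length w₀ ≤ cs.length v + cs.length u := hvu ▸ cs.length_mul_le v u
  omega

theorem exists_isLongest (hfin : (par cs I : Set W).Finite) : ∃ w₀, IsLongest cs I w₀ := by
  obtain ⟨w₀, hw₀, hmax⟩ := Set.exists_max_image _ cs.length hfin ⟨1, one_mem _⟩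
  exact ⟨w₀, hw₀, hmax⟩

theorem par_univ : par cs (Set.univ : Set B) = ⊤ := by
  rw [par, Set.image_univ, cs.subgroup_closure_range_simple]

section Weight

variable {G : Type*} [AddCancelCommMonoid G]

def IsWeightFunction (L : W → G) : Prop :=
  ∀ u v : W, cs.length (u * v) = cs.length u + cs.length v → L (u * v) = L u + L v

variable {cs} {L : W → G}

theorem IsWeightFunction.apply_wordProd (hL : IsWeightFunction cs L) {ω : List B}
    (hω : cs.IsReduced ω) : L (cs.wordProd ω) = (ω.map (L ∘ cs.simple)).sum := by
  induction ω with
  | nil => simpa using hL 1 1 (by simp)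
  | cons i ω ih =>
    have hω' : cs.IsReduced ω := by simpa using hω.drop 1
    have hlen : cs.length (cs.simple i * cs.wordProd ω) =
        cs.length (cs.simple i) + cs.length (cs.wordProd ω) := by
      rw [← wordProd_cons, hω.eq, hω'.eq, length_simple, length_cons, add_comm]
    rw [wordProd_cons, hL _ _ hlen, ih hω']
    simp

theorem IsWeightFunction.apply_inv (hL : IsWeightFunction cs L) (w : W) : L w⁻¹ = L w := by
  obtain ⟨ω, hω, rfl⟩ := cs.exists_isReduced w
  rw [← wordProd_reverse, hL.apply_wordProd hω.reverse, hL.apply_wordProd hω, map_reverse,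
    sum_reverse]

theorem IsWeightFunction.nonneg [PartialOrder G] [IsOrderedAddMonoid G]
    (hL : IsWeightFunction cs L) (hnonneg : ∀ i, 0 ≤ L (cs.simple i)) (w : W) : 0 ≤ L w := by
  obtain ⟨ω, hω, rfl⟩ := cs.exists_isReduced w
  rw [hL.apply_wordProd hω]
  exact sum_nonneg (by simpa using fun i _ => hnonneg i)

theorem IsWeightFunction.apply_simple_mul_of_eq_zero (hL : IsWeightFunction cs L) {i : B}
    (hi : L (cs.simple i) = 0) (z : W) : L (cs.simple i * z) = L z := by
  rcases cs.length_simple_mul z i with h | h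
  · rw [hL _ _ (by rw [h, length_simple, add_comm]), hi, zero_add]
  · have hz := hL (cs.simple i) (cs.simple i * z)
      (by rw [cs.simple_mul_simple_cancel_left, length_simple]; omega)
    rw [cs.simple_mul_simple_cancel_left] at hz
    rw [hz, hi, zero_add]

theorem IsWeightFunction.apply_mul_of_eq_zero_left [PartialOrder G] [IsOrderedAddMonoid G]
    (hL : IsWeightFunction cs L) (hnonneg : ∀ i, 0 ≤ L (cs.simple i)) {a : W} (ha : L a = 0)
    (z : W) : L (a * z) = L z := by
  obtain ⟨ω, hω, rfl⟩ := cs.exists_isReduced a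
  induction ω with
  | nil => simp
  | cons i ω ih =>
    have hω' : cs.IsReduced ω := by simpa using hω.drop 1
    rw [hL.apply_wordProd hω, map_cons, sum_cons, Function.comp_apply, ← hL.apply_wordProd hω',
      add_eq_zero_iff_of_nonneg (hnonneg i) (hL.nonneg hnonneg _)] at ha
    rw [wordProd_cons, mul_assoc, hL.apply_simple_mul_of_eq_zero ha.1, ih hω' ha.2]

theorem IsWeightFunction.apply_mul_of_eq_zero_right [PartialOrder G] [IsOrderedAddMonoid G]
    (hL : IsWeightFunction cs L) (hnonneg : ∀ i, 0 ≤ L (cs.simple i)) {b : W} (hb : L b = 0)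
    (z : W) : L (z * b) = L z := by
  rw [← hL.apply_inv, mul_inv_rev, hL.apply_mul_of_eq_zero_left hnonneg (by rwa [hL.apply_inv]),
    hL.apply_inv]

theorem IsWeightFunction.apply_mul_mul_of_eq_zero [PartialOrder G] [IsOrderedAddMonoid G]
    (hL : IsWeightFunction cs L) (hnonneg : ∀ i, 0 ≤ L (cs.simple i)) {x a y b : W}
    (hb : L b = 0) (h : L (x * a * y) = L x + L a + L y) :
    L (x * (a * b) * (b⁻¹ * y)) = L x + L (a * b) + L (b⁻¹ * y) := by
  rw [show x * (a * b) * (b⁻¹ * y) = x * a * y by group, h,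
    hL.apply_mul_of_eq_zero_right hnonneg hb,
    hL.apply_mul_of_eq_zero_left hnonneg (by rwa [hL.apply_inv])]

theorem IsWeightFunction.apply_inv_mul_eq_zero_of_isLongest [PartialOrder G]
    [IsOrderedCancelAddMonoid G] (hL : IsWeightFunction cs L)
    (hnonneg : ∀ i, 0 ≤ L (cs.simple i)) {w₀ v : W} (hw₀ : IsLongest cs I w₀)
    (hv : v ∈ par cs I) (hle : L w₀ ≤ L v) : L (v⁻¹ * w₀) = 0 := by
  have hsplit : L w₀ = L v + L (v⁻¹ * w₀) := by
    conv_lhs => rw [← mul_inv_cancel_left v w₀]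
    exact hL _ _ (by rw [mul_inv_cancel_left, length_add_length_inv_mul_of_isLongest cs hw₀ hv])
  refine le_antisymm ?_ (hL.nonneg hnonneg _)
  rwa [hsplit, add_le_iff_nonpos_right] at hle

end Weight

theorem stmt3 (L : W → Γ) (ν : Γ)
    (hweight : ∀ u v : W, cs.length (u * v) = cs.length u + cs.length v →
      L (u * v) = L u + L v)
    (hnonneg : ∀ i : B, 0 ≤ L (cs.simple i))
    (hproper : ∀ I : Set B, I ≠ Set.univ → ((par cs I : Set W)).Finite)
    (hν₁ : ∃ (I : Set B) (w₀ : W), I ≠ Set.univ ∧ IsLongest cs I w₀ ∧ L w₀ = ν)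
    (hν₂ : ∀ (I : Set B) (w₀ : W), I ≠ Set.univ → IsLongest cs I w₀ → L w₀ ≤ ν) :
    {z : W | ∃ x w y : W, (∃ I : Set B, I ≠ Set.univ ∧ w ∈ par cs I) ∧ L w = ν ∧
        z = x * w * y ∧ L (x * w * y) = L x + L w + L y} =
    {z : W | ∃ (x w₀ y : W) (I : Set B), ((par cs I : Set W)).Finite ∧
        IsLongest cs I w₀ ∧ L w₀ = ν ∧
        z = x * w₀ * y ∧ L (x * w₀ * y) = L x + L w₀ + L y} := by
  have hL : IsWeightFunction cs L := hweight
  ext z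
  constructor
  · rintro ⟨x, w, y, ⟨I, hI, hwI⟩, rfl, rfl, hadd⟩
    obtain ⟨w₀, hw₀⟩ := exists_isLongest cs (hproper I hI)
    have hb := hL.apply_inv_mul_eq_zero_of_isLongest hnonneg hw₀ hwI (hν₂ I w₀ hI hw₀)
    have hadd' := hL.apply_mul_mul_of_eq_zero hnonneg hb hadd
    have hLw₀ := hL.apply_mul_of_eq_zero_right hnonneg hb w
    rw [mul_inv_cancel_left] at hadd' hLw₀
    exact ⟨x, w₀, _, I, hproper I hI, hw₀, hLw₀, by group, hadd'⟩
  · rintro ⟨x, w₀, y, I, -, hw₀, rfl, rfl, hadd⟩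
    by_cases hI : I = Set.univ
    · subst hI
      obtain ⟨I₁, w₁, hI₁, hw₁, hLw₁⟩ := hν₁
      have hw₁I : w₁ ∈ par cs Set.univ := par_univ cs ▸ Subgroup.mem_top w₁
      have hb := hL.apply_inv_mul_eq_zero_of_isLongest hnonneg hw₀ hw₁I hLw₁.ge
      have hb' : L (w₁⁻¹ * w₀)⁻¹ = 0 := by rwa [hL.apply_inv]
      have hadd' := hL.apply_mul_mul_of_eq_zero hnonneg hb' hadd
      rw [mul_inv_rev, inv_inv, mul_inv_cancel_left] at hadd'
      exact ⟨x, w₁, _, ⟨I₁, hI₁, hw₁.1⟩, hLw₁, by group, hadd'⟩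
    · exact ⟨x, w₀, y, ⟨I, hI, hw₀.1⟩, rfl, rfl, hadd⟩

end Stmt3
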